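/- Let X be an n-dimensional complex Banach space with a normalized 1-unconditional basis, and let N ≥ n be an integer. If (λ_j)_{j=1}^n are nonnegative numbers with Σ λ_j = N, then the operator T = Σ_{j=1}^n λ_j e_j* ⊗ e_j can be written as a sum of N norm-one rank-one projections. In particular, X has a FUNTF of length N. -/

import Mathlib

open scoped BigOperators

lemma logIneq (x : ℝ) (hx : -(1/2) ≤ x) : x - 2*x^2 ≤ Real.log (1+x) := by
  have h1 : (0:ℝ) < 1 + x := by linarith
  have h2 : Real.log (1/(1+x)) ≤ 1/(1+x) - 1 := Real.log_le_sub_one_of_pos (by positivity)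
  rw [Real.log_div one_ne_zero (ne_of_gt h1), Real.log_one] at h2
  have h3 : (1+x) * (1/(1+x)) = 1 := by field_simp
  nlinarith [mul_nonneg (sq_nonneg x) (by linarith : (0:ℝ) ≤ 1 + 2*x), sq_nonneg x]

lemma smallParam (Q R : ℝ) (hR : 0 ≤ R) (h : ∀ t : ℝ, 0 < t → t ≤ 1/2 → Q ≤ 2*t*R) : Q ≤ 0 := by
  by_contra hQ
  push_neg at hQ
  set t := min (1/2) (Q/(8*R+1)) with ht
  have hden : (0:ℝ) < 8*R+1 := by linarith
  have ht0 : 0 < t := lt_min (by norm_num) (by positivity)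
  have ht2 : t ≤ 1/2 := min_le_left _ _
  have ht3 : t ≤ Q/(8*R+1) := min_le_right _ _
  have := h t ht0 ht2
  have h4 : t * (8*R+1) ≤ Q := by
    rw [← le_div_iff₀ hden] at *; exact ht3
  nlinarith [mul_pos ht0 hden]

lemma lozanovskii {X : Type*} [NormedAddCommGroup X] [NormedSpace ℂ X] [FiniteDimensional ℂ X]
    {n : ℕ} (e : Module.Basis (Fin n) ℂ X) (μ : Fin n → ℝ) (hμ : ∀ j, 0 ≤ μ j) (hs : ∑ j, μ j = 1) :
    ∃ a b : Fin n → ℝ, (∀ j, 0 ≤ a j) ∧ (∀ j, 0 ≤ b j) ∧ (∀ j, a j * b j = μ j) ∧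
      (∑ j, b j * a j = 1) ∧ ‖∑ j, (a j : ℂ) • e j‖ = 1 ∧
      ∀ c : Fin n → ℝ, (∀ j, 0 ≤ c j) → ∑ j, b j * c j ≤ ‖∑ j, (c j : ℂ) • e j‖ := by
  classical
  rcases Nat.eq_zero_or_pos n with hn0 | hn0
  · subst hn0; simp at hs
  set F : (Fin n → ℝ) → X := fun c => ∑ j, (c j : ℂ) • e j with hF
  have hFrepr : ∀ (c : Fin n → ℝ) (i : Fin n), e.repr (F c) i = (c i : ℂ) := by
    intro c i
    have := e.repr_sum_self (fun j => ((c j : ℂ)))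
    simp only [hF]
    rw [this]
  have hFzero : ∀ c : Fin n → ℝ, F c = 0 → ∀ j, c j = 0 := by
    intro c h j
    have := hFrepr c j
    rw [h] at this
    simp only [map_zero, Finsupp.coe_zero, Pi.zero_apply] at this
    exact_mod_cast this.symm
  have hFsmul : ∀ (r : ℝ) (c : Fin n → ℝ), F (fun j => r * c j) = (r:ℂ) • F c := by
    intro r c
    simp only [hF, Finset.smul_sum]
    apply Finset.sum_congr rfl
    intro j _
    push_cast
    rw [smul_smul]
  have hFcont : Continuous F := by
    apply continuous_finset_sum
    intro j _
    exact ((Complex.continuous_ofReal.comp (continuous_apply j)).smul continuous_const)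
  set K : Set (Fin n → ℝ) := {c | (∀ j, 0 ≤ c j) ∧ ‖F c‖ ≤ 1} with hK
  have hKclosed : IsClosed K := by
    have h1 : IsClosed {c : Fin n → ℝ | ∀ j, 0 ≤ c j} := by
      have : {c : Fin n → ℝ | ∀ j, 0 ≤ c j} = ⋂ j, {c | 0 ≤ c j} := by ext c; simp
      rw [this]
      exact isClosed_iInter fun j => isClosed_le continuous_const (continuous_apply j)
    exact h1.inter (isClosed_le (hFcont.norm) continuous_const)
  have hKbdd : Bornology.IsBounded K := by
    rw [isBounded_iff_forall_norm_le]
    set Cf : Fin n → ℝ := fun j => ‖LinearMap.toContinuousLinearMap (e.coord j)‖ with hCf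
    have hCf0 : ∀ j, 0 ≤ Cf j := fun j => norm_nonneg _
    refine ⟨∑ j, Cf j, fun c hc => ?_⟩
    rw [pi_norm_le_iff_of_nonneg (Finset.sum_nonneg fun j _ => hCf0 j)]
    intro i
    have h1 : ‖e.repr (F c) i‖ ≤ Cf i * ‖F c‖ := by
      have := (LinearMap.toContinuousLinearMap (e.coord i)).le_opNorm (F c)
      simpa [Module.Basis.coord_apply] using this
    rw [hFrepr] at h1
    simp only [Complex.norm_real, Real.norm_eq_abs] at h1
    have : |c i| ≤ Cf i := le_trans h1 (by nlinarith [hc.2, hCf0 i, norm_nonneg (F c)])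
    calc ‖c i‖ = |c i| := rfl
      _ ≤ Cf i := this
      _ ≤ ∑ j, Cf j := Finset.single_le_sum (fun j _ => hCf0 j) (Finset.mem_univ i)
  have hKcompact : IsCompact K := Metric.isCompact_of_isClosed_isBounded hKclosed hKbdd
  have hKne : K.Nonempty := ⟨0, fun j => le_refl 0, by simp [hF]⟩
  have hKconvex : ∀ c d : Fin n → ℝ, c ∈ K → d ∈ K → ∀ t : ℝ, 0 ≤ t → t ≤ 1 →
      (fun j => (1-t) * c j + t * d j) ∈ K := by
    intro c d hc hd t ht0 ht1
    constructor
    · intro j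
      have h1 := mul_nonneg (by linarith : (0:ℝ) ≤ 1 - t) (hc.1 j)
      have h2 := mul_nonneg ht0 (hd.1 j)
      exact add_nonneg h1 h2
    · have hlin : F (fun j => (1-t) * c j + t * d j) = ((1-t : ℝ):ℂ) • F c + ((t : ℝ):ℂ) • F d := by
        have h1 : (fun j => (1-t) * c j + t * d j) = fun j => ((1-t) * c j) + (t * d j) := rfl
        simp only [hF, Finset.smul_sum, ← Finset.sum_add_distrib]
        apply Finset.sum_congr rfl
        intro j _
        push_cast
        rw [smul_smul, smul_smul, ← add_smul]
      rw [hlin]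
      calc ‖((1-t:ℝ):ℂ) • F c + ((t:ℝ):ℂ) • F d‖ ≤ ‖((1-t:ℝ):ℂ) • F c‖ + ‖((t:ℝ):ℂ) • F d‖ :=
            norm_add_le _ _
        _ = (1-t) * ‖F c‖ + t * ‖F d‖ := by
            rw [norm_smul, norm_smul, Complex.norm_real, Complex.norm_real]
            rw [Real.norm_eq_abs, Real.norm_eq_abs,
              abs_of_nonneg (by linarith : (0:ℝ) ≤ 1 - t), abs_of_nonneg ht0]
        _ ≤ (1-t) * 1 + t * 1 := by
            apply add_le_add
            · exact mul_le_mul_of_nonneg_left hc.2 (by linarith)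
            · exact mul_le_mul_of_nonneg_left hd.2 ht0
        _ = 1 := by ring
  set S : Finset (Fin n) := Finset.univ.filter (fun j => 0 < μ j) with hS
  have hSsum : ∑ j ∈ S, μ j = 1 := by
    rw [← hs]
    apply Finset.sum_subset (Finset.subset_univ S)
    intro j _ hj
    simp only [hS, Finset.mem_filter, Finset.mem_univ, true_and, not_lt] at hj
    linarith [hμ j]
  set G : (Fin n → ℝ) → ℝ := fun c => ∏ j ∈ S, (c j) ^ (μ j) with hG
  have hGcont : Continuous G := by
    apply continuous_finset_prod
    intro j _
    have : Continuous (fun x : ℝ => x ^ (μ j)) := by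
      rw [continuous_iff_continuousAt]
      intro x
      exact Real.continuousAt_rpow_const x (μ j) (Or.inr (hμ j))
    exact this.comp (continuous_apply j)
  obtain ⟨a, haK, hamax⟩ := hKcompact.exists_isMaxOn hKne hGcont.continuousOn
  -- positivity of maximum
  set one : Fin n → ℝ := fun _ => 1 with hone
  have hFone : F one ≠ 0 := by
    intro h
    have := hFzero one h ⟨0, hn0⟩
    simp [hone] at this
  set s0 : ℝ := ‖F one‖ with hs0
  have hs0pos : 0 < s0 := norm_pos_iff.mpr hFone
  have hwK : (fun j : Fin n => s0⁻¹ * one j) ∈ K := by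
    constructor
    · intro j; simp only [hone]; positivity
    · rw [hFsmul, norm_smul, Complex.norm_real, Real.norm_eq_abs,
        abs_of_pos (inv_pos.mpr hs0pos), ← hs0, inv_mul_cancel₀ hs0pos.ne']
  have hGpos : 0 < G a := by
    have h1 : 0 < G (fun j => s0⁻¹ * one j) := by
      apply Finset.prod_pos
      intro j _
      apply Real.rpow_pos_of_pos
      simp only [hone, mul_one]
      positivity
    exact lt_of_lt_of_le h1 (hamax hwK)
  have hapos : ∀ j ∈ S, 0 < a j := by
    intro j hj
    rcases lt_or_eq_of_le (haK.1 j) with h | h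
    · exact h
    · exfalso
      have hj' : μ j ≠ 0 := by
        simp only [hS, Finset.mem_filter] at hj; exact hj.2.ne'
      have : G a = 0 := Finset.prod_eq_zero hj (by rw [← h, Real.zero_rpow hj'])
      rw [this] at hGpos; exact lt_irrefl 0 hGpos
  set b : Fin n → ℝ := fun j => μ j / a j with hb
  have hb0 : ∀ j, 0 ≤ b j := fun j => div_nonneg (hμ j) (haK.1 j)
  have hboff : ∀ j, j ∉ S → b j = 0 := by
    intro j hj
    simp only [hS, Finset.mem_filter, Finset.mem_univ, true_and, not_lt] at hj
    have : μ j = 0 := le_antisymm hj (hμ j)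
    simp [hb, this]
  have hab : ∀ j, a j * b j = μ j := by
    intro j
    by_cases hj : j ∈ S
    · rw [hb]; field_simp [(hapos j hj).ne']
    · rw [hboff j hj, mul_zero]
      simp only [hS, Finset.mem_filter, Finset.mem_univ, true_and, not_lt] at hj
      linarith [hμ j]
  -- key inequality on K
  have hkeyK : ∀ c ∈ K, ∑ j, b j * c j ≤ 1 := by
    intro c hc
    have hba : ∑ j, b j * c j = ∑ j ∈ S, μ j * (c j / a j) := by
      rw [← Finset.sum_subset (Finset.subset_univ S)]
      · apply Finset.sum_congr rfl
        intro j hj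
        rw [hb]; field_simp
      · intro j _ hj
        rw [hboff j hj, zero_mul]
    rw [hba]
    set u : Fin n → ℝ := fun j => c j / a j - 1 with hu
    have hu1 : ∀ j ∈ S, -1 ≤ u j := by
      intro j hj
      have := div_nonneg (hc.1 j) (haK.1 j)
      simp only [hu]; linarith
    set Q : ℝ := ∑ j ∈ S, μ j * u j with hQ
    set R : ℝ := ∑ j ∈ S, μ j * (u j)^2 with hR
    have hR0 : 0 ≤ R := Finset.sum_nonneg fun j hj => mul_nonneg (hμ j) (sq_nonneg _)
    clear_value u Q R
    have hQle : Q ≤ 0 := by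
      apply smallParam Q R hR0
      intro t ht0 ht2
      have hct : (fun j => (1-t) * a j + t * c j) ∈ K :=
        hKconvex a c haK hc t (le_of_lt ht0) (by linarith)
      have hGle : G (fun j => (1-t) * a j + t * c j) ≤ G a := hamax hct
      have heq : ∀ j ∈ S, (1-t) * a j + t * c j = a j * (1 + t * u j) := by
        intro j hj
        simp only [hu]; field_simp [(hapos j hj).ne']; ring
      have hfac : ∀ j ∈ S, 0 < 1 + t * u j := by
        intro j hj
        have h1 := hu1 j hj
        nlinarith [mul_nonneg ht0.le (by linarith : (0:ℝ) ≤ u j + 1)]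
      have hpos2 : ∀ j ∈ S, 0 < (1-t) * a j + t * c j := by
        intro j hj
        rw [heq j hj]
        exact mul_pos (hapos j hj) (hfac j hj)
      have l1 : Real.log (G (fun j => (1-t) * a j + t * c j)) ≤ Real.log (G a) :=
        Real.log_le_log (Finset.prod_pos fun j hj => Real.rpow_pos_of_pos (hpos2 j hj) _) hGle
      simp only [hG] at l1
      rw [Real.log_prod (fun j hj => (Real.rpow_pos_of_pos (hpos2 j hj) _).ne'),
        Real.log_prod (fun j hj => (Real.rpow_pos_of_pos (hapos j hj) _).ne'),
        Finset.sum_congr rfl (fun j hj => Real.log_rpow (hpos2 j hj) (μ j)),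
        Finset.sum_congr rfl (fun j hj => Real.log_rpow (hapos j hj) (μ j))] at l1
      have hsplit : ∀ j ∈ S, Real.log ((1-t) * a j + t * c j)
          = Real.log (a j) + Real.log (1 + t * u j) := by
        intro j hj
        rw [heq j hj, Real.log_mul (hapos j hj).ne' (hfac j hj).ne']
      have hlog2 : ∑ j ∈ S, μ j * Real.log (1 + t * u j) ≤ 0 := by
        rw [Finset.sum_congr rfl (fun j hj => by rw [hsplit j hj])] at l1
        simp only [mul_add, Finset.sum_add_distrib] at l1
        linarith
      have hlb : ∀ j ∈ S, t * u j - 2 * (t * u j)^2 ≤ Real.log (1 + t * u j) := by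
        intro j hj
        apply logIneq
        have h1 := hu1 j hj
        have h2 : t * (-1) ≤ t * u j := mul_le_mul_of_nonneg_left h1 ht0.le
        have h3 : t * (-1) = -t := by ring
        linarith
      have hsum2 : ∑ j ∈ S, μ j * (t * u j - 2 * (t * u j)^2) ≤ 0 :=
        le_trans (Finset.sum_le_sum fun j hj => mul_le_mul_of_nonneg_left (hlb j hj) (hμ j)) hlog2
      have hexp : ∑ j ∈ S, μ j * (t * u j - 2 * (t * u j)^2) = t * Q - 2 * t^2 * R := by
        rw [hQ, hR, Finset.mul_sum, Finset.mul_sum, ← Finset.sum_sub_distrib]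
        apply Finset.sum_congr rfl
        intro j _
        ring
      rw [hexp] at hsum2
      nlinarith
    have hfin : ∑ j ∈ S, μ j * (c j / a j) = ∑ j ∈ S, μ j + Q := by
      rw [hQ, ← Finset.sum_add_distrib]
      apply Finset.sum_congr rfl
      intro j _
      simp only [hu]; ring
    rw [hfin, hSsum]
    linarith
  have hkey : ∀ c : Fin n → ℝ, (∀ j, 0 ≤ c j) → ∑ j, b j * c j ≤ ‖F c‖ := by
    intro c hc0
    by_cases hzero : F c = 0
    · have h0 := hFzero c hzero
      simp [h0, hzero]
    · set r : ℝ := ‖F c‖ with hr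
      have hrpos : 0 < r := norm_pos_iff.mpr hzero
      have hcK : (fun j => r⁻¹ * c j) ∈ K := by
        constructor
        · intro j; exact mul_nonneg (inv_nonneg.mpr hrpos.le) (hc0 j)
        · rw [hFsmul, norm_smul, Complex.norm_real, Real.norm_eq_abs,
            abs_of_pos (inv_pos.mpr hrpos), ← hr, inv_mul_cancel₀ hrpos.ne']
      have h1 := hkeyK _ hcK
      have h2 : ∑ j, b j * (r⁻¹ * c j) = r⁻¹ * ∑ j, b j * c j := by
        rw [Finset.mul_sum]; apply Finset.sum_congr rfl; intro j _; ring
      rw [h2] at h1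
      calc ∑ j, b j * c j = r * (r⁻¹ * ∑ j, b j * c j) := by
            field_simp
        _ ≤ r * 1 := mul_le_mul_of_nonneg_left h1 (le_of_lt hrpos)
        _ = r := mul_one r
  have hba1 : ∑ j, b j * a j = 1 := by
    have h1 : ∑ j, b j * a j = ∑ j, μ j := by
      apply Finset.sum_congr rfl
      intro j _
      rw [← hab j]; ring
    rw [h1, hs]
  have hnorm1 : ‖F a‖ = 1 := by
    have h1 := hkey a haK.1
    rw [hba1] at h1
    exact le_antisymm haK.2 h1
  exact ⟨a, b, haK.1, hb0, hab, hba1, hnorm1, hkey⟩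

lemma construction {X : Type*} [NormedAddCommGroup X] [NormedSpace ℂ X] [FiniteDimensional ℂ X]
    (n N : ℕ) (hn : 0 < n) (hN : n ≤ N)
    (e : Module.Basis (Fin n) ℂ X)
    (huncond : ∀ θ : Fin n → ℂ, (∀ j, ‖θ j‖ = 1) →
      ∀ a : Fin n → ℂ, ‖∑ j, (θ j * a j) • e j‖ = ‖∑ j, a j • e j‖)
    (lam : Fin n → ℝ) (hlam : ∀ j, 0 ≤ lam j) (hsum : ∑ j, lam j = N) :
    ∃ (x : Fin N → X) (g : Fin N → X →L[ℂ] ℂ),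
      (∀ k, ‖x k‖ = 1) ∧ (∀ k, ‖g k‖ = 1) ∧ (∀ k, g k (x k) = 1) ∧
      ∀ v : X, ∑ k, g k v • x k = ∑ j, ((lam j : ℂ) * e.coord j v) • e j := by
  classical
  have hN0 : 0 < N := lt_of_lt_of_le hn hN
  have hNR : (0:ℝ) < N := by exact_mod_cast hN0
  set μ : Fin n → ℝ := fun j => lam j / N with hμdef
  have hμ0 : ∀ j, 0 ≤ μ j := fun j => div_nonneg (hlam j) hNR.le
  have hμs : ∑ j, μ j = 1 := by
    simp only [hμdef]
    rw [← Finset.sum_div, hsum, div_self hNR.ne']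
  obtain ⟨a, b, ha0, hb0, hab, hba1, hxa, hkey⟩ := lozanovskii e μ hμ0 hμs
  clear_value μ
  set ω : ℂ := Complex.exp (2 * Real.pi * Complex.I / N) with hω
  have hprim : IsPrimitiveRoot ω N := Complex.isPrimitiveRoot_exp N hN0.ne'
  have hωabs1 : ‖ω‖ = 1 := by
    rw [hω, show (2 * (Real.pi:ℂ) * Complex.I / (N:ℂ)) = ((2 * Real.pi / N : ℝ) : ℂ) * Complex.I
      by push_cast; ring]
    exact Complex.norm_exp_ofReal_mul_I _
  have hωabs : ∀ m : ℕ, ‖ω ^ m‖ = 1 := by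
    intro m; rw [norm_pow, hωabs1, one_pow]
  have hωne : ∀ m : ℕ, ω ^ m ≠ 0 := by
    intro m
    intro h
    have := hωabs m
    rw [h] at this
    simp at this
  clear_value ω
  set x : Fin N → X := fun k => ∑ j, (ω ^ (k.val * j.val) * (a j : ℂ)) • e j with hx
  set φ : Fin N → (X →ₗ[ℂ] ℂ) :=
    fun k => ∑ j, ((ω ^ (k.val*j.val))⁻¹ * (b j : ℂ)) • e.coord j with hφ
  set g : Fin N → (X →L[ℂ] ℂ) := fun k => LinearMap.toContinuousLinearMap (φ k) with hg
  have hgv : ∀ (k : Fin N) (v : X),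
      g k v = ∑ j, (ω ^ (k.val*j.val))⁻¹ * (b j : ℂ) * e.coord j v := by
    intro k v
    simp only [hg, hφ, LinearMap.coe_toContinuousLinearMap', LinearMap.sum_apply,
      LinearMap.smul_apply, smul_eq_mul]
  have hcoordx : ∀ (k : Fin N) (i : Fin n),
      e.coord i (x k) = ω ^ (k.val*i.val) * (a i : ℂ) := by
    intro k i
    rw [Module.Basis.coord_apply, hx]
    exact congrFun (e.repr_sum_self (fun j => ω ^ (k.val*j.val) * (a j:ℂ))) i
  have hxnorm : ∀ k, ‖x k‖ = 1 := by
    intro k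
    have h1 := huncond (fun j => ω ^ (k.val*j.val))
      (fun j => by exact hωabs _) (fun j => (a j : ℂ))
    rw [hx]
    exact h1.trans hxa
  have habs : ∀ v : X, ∑ j, b j * ‖e.coord j v‖ ≤ ‖v‖ := by
    intro v
    set c : Fin n → ℂ := fun i => e.repr v i with hc
    have hv : ∑ j, c j • e j = v := e.sum_repr v
    set θ : Fin n → ℂ := fun j => if c j = 0 then 1 else (‖c j‖ : ℂ) / c j with hθ
    have hθ1 : ∀ j, ‖θ j‖ = 1 := by
      intro j
      simp only [hθ]
      by_cases h : c j = 0
      · simp [h]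
      · rw [if_neg h, norm_div, Complex.norm_real,
          norm_norm, div_self (by simpa using h)]
    have hθc : ∀ j, θ j * c j = (‖c j‖ : ℂ) := by
      intro j
      simp only [hθ]
      by_cases h : c j = 0
      · simp [h]
      · rw [if_neg h, div_mul_cancel₀ _ h]
    have h2 := huncond θ hθ1 c
    rw [Finset.sum_congr rfl (fun j _ => by rw [hθc j]), hv] at h2
    have h3 := hkey (fun j => ‖c j‖) (fun j => norm_nonneg _)
    rw [h2] at h3
    have h4 : ∀ j, e.coord j v = c j := fun j => Module.Basis.coord_apply _ _ _
    calc ∑ j, b j * ‖e.coord j v‖ = ∑ j, b j * ‖c j‖ := by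
          apply Finset.sum_congr rfl; intro j _; rw [h4]
      _ ≤ ‖v‖ := h3
  have hgbound : ∀ (k : Fin N) (v : X), ‖g k v‖ ≤ ‖v‖ := by
    intro k v
    rw [hgv]
    calc ‖∑ j, (ω ^ (k.val*j.val))⁻¹ * (b j : ℂ) * e.coord j v‖
        ≤ ∑ j, ‖(ω ^ (k.val*j.val))⁻¹ * (b j : ℂ) * e.coord j v‖ := norm_sum_le _ _
      _ = ∑ j, b j * ‖e.coord j v‖ := by
          apply Finset.sum_congr rfl
          intro j _
          rw [norm_mul, norm_mul, norm_inv, hωabs, inv_one, one_mul,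
            Complex.norm_real, Real.norm_eq_abs, abs_of_nonneg (hb0 j)]
      _ ≤ ‖v‖ := habs v
  have hgx : ∀ k, g k (x k) = 1 := by
    intro k
    rw [hgv]
    have h1 : ∀ j : Fin n, (ω ^ (k.val*j.val))⁻¹ * (b j:ℂ) * e.coord j (x k)
        = ((b j * a j : ℝ) : ℂ) := by
      intro j
      rw [hcoordx]
      have h0 := hωne (k.val*j.val)
      push_cast
      field_simp
    rw [Finset.sum_congr rfl (fun j _ => h1 j)]
    rw [show (∑ j, ((b j * a j : ℝ) : ℂ)) = ((∑ j, b j * a j : ℝ) : ℂ) by push_cast; ring]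
    rw [hba1, Complex.ofReal_one]
  have hgnorm : ∀ k, ‖g k‖ = 1 := by
    intro k
    apply le_antisymm
    · apply ContinuousLinearMap.opNorm_le_bound _ zero_le_one
      intro v; rw [one_mul]; exact hgbound k v
    · have h1 := (g k).le_opNorm (x k)
      rw [hgx k, hxnorm k, mul_one] at h1
      simpa using h1
  refine ⟨x, g, hxnorm, hgnorm, hgx, ?_⟩
  intro v
  -- roots of unity sums
  have hzsum : ∀ i j : Fin n,
      ∑ k : Fin N, (ω ^ j.val * (ω ^ i.val)⁻¹) ^ k.val
        = if i = j then (N:ℂ) else 0 := by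
    intro i j
    rw [Fin.sum_univ_eq_sum_range (fun m => (ω ^ j.val * (ω ^ i.val)⁻¹) ^ m) N]
    by_cases h : i = j
    · subst h
      rw [if_pos rfl, mul_inv_cancel₀ (hωne _)]
      simp
    · rw [if_neg h]
      have hz1 : ω ^ j.val * (ω ^ i.val)⁻¹ ≠ 1 := by
        intro habs
        apply h
        have h2 : ω ^ j.val = ω ^ i.val := by
          field_simp [hωne i.val] at habs
          exact habs
        have h3 := hprim.pow_inj (lt_of_lt_of_le j.isLt hN) (lt_of_lt_of_le i.isLt hN) h2
        exact Fin.ext h3.symm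
      rw [geom_sum_eq hz1 N]
      have hzN : (ω ^ j.val * (ω ^ i.val)⁻¹) ^ N = 1 := by
        rw [mul_pow, inv_pow, ← pow_mul, ← pow_mul, mul_comm j.val N, mul_comm i.val N,
          pow_mul, pow_mul, hprim.pow_eq_one, one_pow, one_pow, inv_one, mul_one]
      rw [hzN]
      simp
  have hz : ∀ (k : Fin N) (i j : Fin n),
      (ω ^ (k.val*i.val))⁻¹ * ω ^ (k.val*j.val)
        = (ω ^ j.val * (ω ^ i.val)⁻¹) ^ k.val := by
    intro k i j
    rw [mul_pow, inv_pow, ← pow_mul, ← pow_mul, mul_comm j.val k.val, mul_comm i.val k.val,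
      mul_comm]
  have step1 : ∀ k : Fin N, g k v • x k
      = ∑ j, (g k v * (ω ^ (k.val*j.val) * (a j:ℂ))) • e j := by
    intro k
    rw [hx, Finset.smul_sum]
    apply Finset.sum_congr rfl
    intro j _
    rw [smul_smul]
  rw [Finset.sum_congr rfl (fun k _ => step1 k), Finset.sum_comm]
  apply Finset.sum_congr rfl
  intro j _
  rw [← Finset.sum_smul]
  congr 1
  calc ∑ k : Fin N, g k v * (ω ^ (k.val*j.val) * (a j:ℂ))
      = ∑ k : Fin N, ∑ i, ((ω ^ j.val * (ω ^ i.val)⁻¹) ^ k.val)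
          * ((b i:ℂ) * e.coord i v * (a j:ℂ)) := by
        apply Finset.sum_congr rfl
        intro k _
        rw [hgv, Finset.sum_mul]
        apply Finset.sum_congr rfl
        intro i _
        rw [← hz k i j]
        ring
    _ = ∑ i, (∑ k : Fin N, (ω ^ j.val * (ω ^ i.val)⁻¹) ^ k.val)
          * ((b i:ℂ) * e.coord i v * (a j:ℂ)) := by
        rw [Finset.sum_comm]
        apply Finset.sum_congr rfl
        intro i _
        rw [Finset.sum_mul]
    _ = (N:ℂ) * ((b j:ℂ) * e.coord j v * (a j:ℂ)) := by
        rw [Finset.sum_eq_single j]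
        · rw [hzsum j j, if_pos rfl]
        · intro i _ hij
          rw [hzsum i j, if_neg hij, zero_mul]
        · intro h
          exact absurd (Finset.mem_univ j) h
    _ = (lam j : ℂ) * e.coord j v := by
        have hN' : (N:ℝ) * (b j * a j) = lam j := by
          have h1 := hab j
          rw [hμdef] at h1
          field_simp at h1 ⊢
          linarith [h1]
        calc (N:ℂ) * ((b j:ℂ) * e.coord j v * (a j:ℂ))
            = (((N:ℝ) * (b j * a j) : ℝ) : ℂ) * e.coord j v := by push_cast; ring
          _ = (lam j : ℂ) * e.coord j v := by rw [hN']

/-- On an `n`-dimensional complex space with a normalized 1-unconditional basis, any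
nonnegative diagonal operator of trace `N ≥ n` is a sum of `N` norm-one rank-one projections;
in particular, the space has a FUNTF of length `N`. -/
theorem diagonal_sum_of_N_projections_and_funtf
    {X : Type*} [NormedAddCommGroup X] [NormedSpace ℂ X] [FiniteDimensional ℂ X]
    (n N : ℕ) (hn : 0 < n) (hN : n ≤ N)
    (e : Module.Basis (Fin n) ℂ X) (henorm : ∀ j, ‖e j‖ = 1)
    (huncond : ∀ θ : Fin n → ℂ, (∀ j, ‖θ j‖ = 1) →
      ∀ a : Fin n → ℂ, ‖∑ j, (θ j * a j) • e j‖ = ‖∑ j, a j • e j‖)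
    (lam : Fin n → ℝ) (hlam : ∀ j, 0 ≤ lam j) (hsum : ∑ j, lam j = N) :
    (∃ (x : Fin N → X) (g : Fin N → X →L[ℂ] ℂ),
      (∀ k, ‖x k‖ = 1) ∧ (∀ k, ‖g k‖ = 1) ∧ (∀ k, g k (x k) = 1) ∧
      ∀ v : X, ∑ k, g k v • x k = ∑ j, ((lam j : ℂ) * e.coord j v) • e j) ∧
    (∃ (x : Fin N → X) (g : Fin N → X →L[ℂ] ℂ),
      (∀ k, ‖x k‖ = 1) ∧ (∀ k, ‖g k‖ = 1) ∧ (∀ k, g k (x k) = 1) ∧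
      ∀ v : X, ∑ k, g k v • x k = ((N : ℂ) / (n : ℂ)) • v) := by
  constructor
  · exact construction n N hn hN e huncond lam hlam hsum
  · have hnR : (0:ℝ) < n := by exact_mod_cast hn
    obtain ⟨x, g, h1, h2, h3, h4⟩ := construction n N hn hN e huncond
      (fun _ => (N:ℝ) / n) (fun _ => by positivity)
      (by rw [Finset.sum_const, Finset.card_univ, Fintype.card_fin, nsmul_eq_mul]
          field_simp)
    refine ⟨x, g, h1, h2, h3, ?_⟩
    intro v
    rw [h4 v]
    have hc : ∀ j : Fin n, ((((N:ℝ)/n : ℝ)) : ℂ) = (N:ℂ)/(n:ℂ) := by intro j; push_cast; ring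
    calc ∑ j, ((((N:ℝ)/n : ℝ) : ℂ) * e.coord j v) • e j
        = ∑ j, ((N:ℂ)/(n:ℂ)) • (e.repr v j • e j) := by
          apply Finset.sum_congr rfl
          intro j _
          rw [hc j, Module.Basis.coord_apply, smul_smul]
      _ = ((N:ℂ)/(n:ℂ)) • ∑ j, e.repr v j • e j := by rw [Finset.smul_sum]
      _ = ((N:ℂ)/(n:ℂ)) • v := by rw [e.sum_repr]
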